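/- Singular value bounds at the projection onto the manifold of global minima: for every θ ∈ ℝ^{(p+d)×d}, if θ* is a point of S minimizing ‖θ − s‖_P over s ∈ S, then K0 ≤ σ_d(P^{1/2} θ* Σ)² and σ_1(P^{1/2} θ* Σ)² ≤ K1, where K0 = 2σ_d(M Σ^{1/2})·σ_d(Σ) and K1 = 2σ_1(M Σ^{1/2})·σ_1(Σ). -/

import Mathlib

open MeasureTheory Matrix Real
open scoped BigOperators

noncomputable section

def vnorm {ι : Type*} [Fintype ι] (v : ι → ℝ) : ℝ := Real.sqrt (∑ i, (v i) ^ 2)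

def frob {ι κ : Type*} [Fintype ι] [Fintype κ] (A : Matrix ι κ ℝ) : ℝ :=
  Real.sqrt (∑ i, ∑ j, (A i j) ^ 2)

def opN {ι κ : Type*} [Fintype ι] [Fintype κ] (A : Matrix ι κ ℝ) : ℝ :=
  sSup {r | ∃ x : κ → ℝ, vnorm x ≤ 1 ∧ r = vnorm (A.mulVec x)}

def svalMax {ι κ : Type*} [Fintype ι] [Fintype κ] (A : Matrix ι κ ℝ) : ℝ :=
  sSup {r | ∃ x : κ → ℝ, vnorm x = 1 ∧ r = vnorm (A.mulVec x)}

def svalMin {ι κ : Type*} [Fintype ι] [Fintype κ] (A : Matrix ι κ ℝ) : ℝ :=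
  sInf {r | ∃ x : κ → ℝ, vnorm x = 1 ∧ r = vnorm (A.mulVec x)}

def msqrt {ι : Type*} [Fintype ι] [DecidableEq ι] (S : Matrix ι ι ℝ) : Matrix ι ι ℝ :=
  @dite _ S.PosSemidef (Classical.dec _) (fun h => (h.1.eigenvectorUnitary : Matrix ι ι ℝ) *
    Matrix.diagonal ((↑) ∘ Real.sqrt ∘ h.1.eigenvalues) *
    (star h.1.eigenvectorUnitary : Matrix ι ι ℝ)) (fun _ => 0)

def gaussian {k : ℕ} (S : Matrix (Fin k) (Fin k) ℝ) : Measure (Fin k → ℝ) :=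
  Measure.map ((msqrt S).mulVec) (Measure.pi fun _ => ProbabilityTheory.gaussianReal 0 1)

/-- Population loss. -/
def popLoss {d p : ℕ} (Sig : Matrix (Fin d) (Fin d) ℝ) (Om : Matrix (Fin p) (Fin p) ℝ)
    (M A : Matrix (Fin p) (Fin d) ℝ) (B : Matrix (Fin d) (Fin d) ℝ) : ℝ :=
  (1/2) * ∫ w : (Fin d → ℝ) × (Fin p → ℝ),
      vnorm (A.mulVec
        ((∫ x2, Real.exp (w.1 ⬝ᵥ B.mulVec x2) ∂gaussian Sig)⁻¹ •
          ∫ x2, Real.exp (w.1 ⬝ᵥ B.mulVec x2) • x2 ∂gaussian Sig)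
        - (M.mulVec w.1 + w.2)) ^ 2
    ∂((gaussian Sig).prod (gaussian Om))

/-- Population regularizer. -/
def reg {d p : ℕ} (Sig : Matrix (Fin d) (Fin d) ℝ) (A : Matrix (Fin p) (Fin d) ℝ)
    (B : Matrix (Fin d) (Fin d) ℝ) : ℝ :=
  (1/8) * frob (msqrt Sig * (Aᵀ * A - Bᵀ * Sig * B) * msqrt Sig) ^ 2

/-- Vertical concatenation of `A` and `B`. -/
def vcat {d p : ℕ} (A : Matrix (Fin p) (Fin d) ℝ) (B : Matrix (Fin d) (Fin d) ℝ) :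
    Matrix (Fin p ⊕ Fin d) (Fin d) ℝ := Matrix.of (Sum.elim A B)

def topM {d p : ℕ} (θ : Matrix (Fin p ⊕ Fin d) (Fin d) ℝ) : Matrix (Fin p) (Fin d) ℝ :=
  Matrix.of fun i j => θ (Sum.inl i) j

def botM {d p : ℕ} (θ : Matrix (Fin p ⊕ Fin d) (Fin d) ℝ) : Matrix (Fin d) (Fin d) ℝ :=
  Matrix.of fun i j => θ (Sum.inr i) j

/-- Extended covariance matrix `P = diag(I_p, Σ)`. -/
def Pmat (p : ℕ) {d : ℕ} (Sig : Matrix (Fin d) (Fin d) ℝ) :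
    Matrix (Fin p ⊕ Fin d) (Fin p ⊕ Fin d) ℝ :=
  Matrix.fromBlocks 1 0 0 Sig

def Pinner {d p : ℕ} (Sig : Matrix (Fin d) (Fin d) ℝ)
    (θ1 θ2 : Matrix (Fin p ⊕ Fin d) (Fin d) ℝ) : ℝ :=
  (θ1ᵀ * Pmat p Sig * θ2).trace

def Pnorm {d p : ℕ} (Sig : Matrix (Fin d) (Fin d) ℝ)
    (θ : Matrix (Fin p ⊕ Fin d) (Fin d) ℝ) : ℝ :=
  Real.sqrt (Pinner Sig θ θ)

attribute [local instance] Matrix.normedAddCommGroup Matrix.normedSpace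

/-- Gradient (w.r.t. the Frobenius inner product) of a scalar function of a matrix. -/
def matGrad {ι κ : Type*} [Fintype ι] [Fintype κ] [DecidableEq ι] [DecidableEq κ]
    (f : Matrix ι κ ℝ → ℝ) (θ : Matrix ι κ ℝ) : Matrix ι κ ℝ :=
  Matrix.of fun i j => fderiv ℝ f θ (Matrix.single i j 1)

/-- Regularized population loss as a function of the concatenated parameter. -/
def Qfun {d p : ℕ} (Sig : Matrix (Fin d) (Fin d) ℝ) (Om : Matrix (Fin p) (Fin p) ℝ)
    (M : Matrix (Fin p) (Fin d) ℝ) (θ : Matrix (Fin p ⊕ Fin d) (Fin d) ℝ) : ℝ :=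
  popLoss Sig Om M (topM θ) (botM θ) + reg Sig (topM θ) (botM θ)

def gradQ {d p : ℕ} (Sig : Matrix (Fin d) (Fin d) ℝ) (Om : Matrix (Fin p) (Fin p) ℝ)
    (M : Matrix (Fin p) (Fin d) ℝ) (θ : Matrix (Fin p ⊕ Fin d) (Fin d) ℝ) :
    Matrix (Fin p ⊕ Fin d) (Fin d) ℝ :=
  matGrad (Qfun Sig Om M) θ

/-- The manifold `S` of global minimizers. -/
def Sman {d p : ℕ} (Sig : Matrix (Fin d) (Fin d) ℝ) (U : Matrix (Fin p) (Fin d) ℝ)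
    (Γ V : Matrix (Fin d) (Fin d) ℝ) : Set (Matrix (Fin p ⊕ Fin d) (Fin d) ℝ) :=
  {θ | ∃ J : Matrix (Fin d) (Fin d) ℝ, Jᵀ * J = 1 ∧
    θ = vcat (U * msqrt Γ * Jᵀ * (msqrt Sig)⁻¹)
             ((msqrt Sig)⁻¹ * V * msqrt Γ * Jᵀ * (msqrt Sig)⁻¹)}

def K0 {d p : ℕ} (Sig : Matrix (Fin d) (Fin d) ℝ) (M : Matrix (Fin p) (Fin d) ℝ) : ℝ :=
  2 * svalMin (M * msqrt Sig) * svalMin Sig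

def K1 {d p : ℕ} (Sig : Matrix (Fin d) (Fin d) ℝ) (M : Matrix (Fin p) (Fin d) ℝ) : ℝ :=
  2 * svalMax (M * msqrt Sig) * svalMax Sig

def betaC {d p : ℕ} (Sig : Matrix (Fin d) (Fin d) ℝ) (M : Matrix (Fin p) (Fin d) ℝ) : ℝ :=
  (14 + 7 * (svalMax Sig / svalMin Sig) ^ 2) * K1 Sig M ^ 2
    + 21 * opN Sig ^ 2 * K1 Sig M + 7 * opN Sig ^ 4

def eps0 {d p : ℕ} (Sig : Matrix (Fin d) (Fin d) ℝ) (M : Matrix (Fin p) (Fin d) ℝ) : ℝ :=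
  min 1 (min (Real.sqrt (K0 Sig M / (3 * K1 Sig M * opN Sig)))
    (Real.sqrt (Real.sqrt (K0 Sig M / 2)) / Real.sqrt (opN Sig)))

def eps1 {d p : ℕ} (Sig : Matrix (Fin d) (Fin d) ℝ) (M : Matrix (Fin p) (Fin d) ℝ) : ℝ :=
  (1 / (2 * Real.sqrt (opN Sig))) * (1/16 - Real.sqrt (svalMax (M * msqrt Sig)))

/-- Softmax self-attention weights. -/
def softmaxW {d n : ℕ} (B : Matrix (Fin d) (Fin d) ℝ) (X : Fin n → Fin d → ℝ)
    (i j : Fin n) : ℝ :=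
  Real.exp (X i ⬝ᵥ B.mulVec (X j)) / ∑ k, Real.exp (X i ⬝ᵥ B.mulVec (X k))

/-- Softmax-weighted mean `μ_i`. -/
def wmean {d n : ℕ} (B : Matrix (Fin d) (Fin d) ℝ) (X : Fin n → Fin d → ℝ)
    (i : Fin n) : Fin d → ℝ :=
  ∑ j, softmaxW B X i j • X j


/-- Empirical covariance of a sample. -/
def empCov {d n : ℕ} (X : Fin n → Fin d → ℝ) : Matrix (Fin d) (Fin d) ℝ :=
  (n:ℝ)⁻¹ • ∑ i, Matrix.vecMulVec (X i) (X i)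


/-! ### Auxiliary lemmas for the projection singular value bounds -/

section AuxSval

variable {ι κ : Type*} [Fintype ι] [Fintype κ]

lemma vnorm_nonneg' (v : ι → ℝ) : 0 ≤ vnorm v := Real.sqrt_nonneg _

lemma vnorm_sq' (v : ι → ℝ) : vnorm v ^ 2 = ∑ i, v i ^ 2 :=
  Real.sq_sqrt (Finset.sum_nonneg fun _ _ => sq_nonneg _)

lemma sum_sq_eq_dot (v : ι → ℝ) : ∑ i, v i ^ 2 = v ⬝ᵥ v := by simp [dotProduct, sq]

lemma sum_sq_mulVec (A : Matrix ι κ ℝ) (x : κ → ℝ) :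
    ∑ i, (A.mulVec x i) ^ 2 = ((Aᵀ * A).mulVec x) ⬝ᵥ x := by
  rw [sum_sq_eq_dot, Matrix.dotProduct_mulVec]
  have h1 : (A.mulVec x) ᵥ* A = Aᵀ.mulVec (A.mulVec x) := by
    rw [← Matrix.vecMul_transpose Aᵀ, Matrix.transpose_transpose]
  rw [h1, Matrix.mulVec_mulVec]

lemma vnorm_mulVec_orth [DecidableEq κ] {U : Matrix ι κ ℝ} (hU : Uᵀ * U = 1) (z : κ → ℝ) :
    vnorm (U.mulVec z) = vnorm z := by
  unfold vnorm; congr 1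
  rw [sum_sq_mulVec, hU, Matrix.one_mulVec, ← sum_sq_eq_dot]

lemma vnorm_single [DecidableEq ι] (i : ι) (c : ℝ) : vnorm (Pi.single i c) = |c| := by
  unfold vnorm
  rw [show (∑ j, (Pi.single i c j)^2) = c^2 from ?_, Real.sqrt_sq_eq_abs]
  rw [Finset.sum_eq_single i]
  · simp
  · intro b _ hb; simp [Pi.single_eq_of_ne hb]
  · simp

lemma sval_set_nonneg (A : Matrix ι κ ℝ) :
    ∀ r ∈ {r | ∃ x : κ → ℝ, vnorm x = 1 ∧ r = vnorm (A.mulVec x)}, 0 ≤ r := by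
  rintro r ⟨x, -, rfl⟩; exact vnorm_nonneg' _

lemma sval_bddAbove (A : Matrix ι κ ℝ) :
    BddAbove {r | ∃ x : κ → ℝ, vnorm x = 1 ∧ r = vnorm (A.mulVec x)} := by
  refine ⟨frob A, ?_⟩
  rintro r ⟨x, hx, rfl⟩
  unfold vnorm frob
  apply Real.sqrt_le_sqrt
  have hx2 : ∑ j, x j ^ 2 = 1 := by
    have := vnorm_sq' x; rw [hx] at this; linarith [this]
  calc ∑ i, (A.mulVec x i) ^ 2 ≤ ∑ i, ((∑ j, A i j ^ 2) * ∑ j, x j ^ 2) := by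
        refine Finset.sum_le_sum fun i _ => ?_
        exact Finset.sum_mul_sq_le_sq_mul_sq _ _ _
    _ = ∑ i, ∑ j, A i j ^ 2 := by rw [hx2]; simp

lemma svalMin_nonneg (A : Matrix ι κ ℝ) : 0 ≤ svalMin A :=
  Real.sInf_nonneg (sval_set_nonneg A)

lemma svalMax_nonneg (A : Matrix ι κ ℝ) : 0 ≤ svalMax A :=
  Real.sSup_nonneg (sval_set_nonneg A)

lemma svalMin_le (A : Matrix ι κ ℝ) {x : κ → ℝ} (hx : vnorm x = 1) :
    svalMin A ≤ vnorm (A.mulVec x) :=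
  csInf_le ⟨0, sval_set_nonneg A⟩ ⟨x, hx, rfl⟩

lemma le_svalMax (A : Matrix ι κ ℝ) {x : κ → ℝ} (hx : vnorm x = 1) :
    vnorm (A.mulVec x) ≤ svalMax A :=
  le_csSup (sval_bddAbove A) ⟨x, hx, rfl⟩

lemma svalMin_of_isEmpty [IsEmpty κ] (A : Matrix ι κ ℝ) : svalMin A = 0 := by
  unfold svalMin
  have h : {r | ∃ x : κ → ℝ, vnorm x = 1 ∧ r = vnorm (A.mulVec x)} = ∅ := by
    ext r; simp [vnorm]
  rw [h, Real.sInf_empty]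

lemma svalMax_of_isEmpty [IsEmpty κ] (A : Matrix ι κ ℝ) : svalMax A = 0 := by
  unfold svalMax
  have h : {r | ∃ x : κ → ℝ, vnorm x = 1 ∧ r = vnorm (A.mulVec x)} = ∅ := by
    ext r; simp [vnorm]
  rw [h, Real.sSup_empty]

lemma sval_bounds_diag [DecidableEq κ] (A U : Matrix ι κ ℝ) (G V : Matrix κ κ ℝ)
    (hU : Uᵀ * U = 1) (hV : Vᵀ * V = 1) (hG : G.IsDiag) (hGpos : ∀ i, 0 ≤ G i i)
    (hA : A = U * G * Vᵀ) (i : κ) :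
    svalMin A ≤ G i i ∧ G i i ≤ svalMax A := by
  set x := V.mulVec (Pi.single i 1) with hxdef
  have hx : vnorm x = 1 := by
    rw [hxdef, vnorm_mulVec_orth hV, vnorm_single]; norm_num
  have hGe : G.mulVec (Pi.single i 1) = Pi.single i (G i i) := by
    funext j
    by_cases hji : j = i
    · subst hji; simp [Matrix.mulVec_single]
    · simp [Matrix.mulVec_single, Pi.single_eq_of_ne hji, hG hji]
  have hAx : A.mulVec x = U.mulVec (Pi.single i (G i i)) := by
    rw [hxdef, Matrix.mulVec_mulVec, hA, Matrix.mul_assoc (U * G), hV, Matrix.mul_one]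
    rw [← Matrix.mulVec_mulVec, hGe]
  have hval : vnorm (A.mulVec x) = G i i := by
    rw [hAx, vnorm_mulVec_orth hU, vnorm_single, abs_of_nonneg (hGpos i)]
  constructor
  · rw [← hval]; exact svalMin_le A hx
  · rw [← hval]; exact le_svalMax A hx

lemma dot_diag_mulVec [DecidableEq κ] {D : Matrix κ κ ℝ} (hD : D.IsDiag) (y : κ → ℝ) :
    y ⬝ᵥ D.mulVec y = ∑ i, D i i * y i ^ 2 := by
  unfold dotProduct Matrix.mulVec
  refine Finset.sum_congr rfl fun i _ => ?_
  rw [show (fun j => D i j) ⬝ᵥ y = D i i * y i from ?_]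
  · ring
  · unfold dotProduct
    rw [Finset.sum_eq_single i]
    · intro b _ hb; simp [hD (Ne.symm hb)]
    · simp

lemma quad_bounds [DecidableEq κ] (W D : Matrix κ κ ℝ) (hW : Wᵀ * W = 1) (hD : D.IsDiag)
    {a b : ℝ} (hab : ∀ i, a ≤ D i i ∧ D i i ≤ b) {x : κ → ℝ} (hx : vnorm x = 1) :
    a ≤ x ⬝ᵥ (W * D * Wᵀ).mulVec x ∧ x ⬝ᵥ (W * D * Wᵀ).mulVec x ≤ b := by
  have hWWt : W * Wᵀ = 1 := mul_eq_one_comm.mp hW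
  set c := Wᵀ.mulVec x with hcdef
  have hc : vnorm c = 1 := by
    rw [hcdef, vnorm_mulVec_orth (by rwa [Matrix.transpose_transpose]) x, hx]
  have hcsum : ∑ i, c i ^ 2 = 1 := by
    have := vnorm_sq' c; rw [hc] at this; linarith [this]
  have hform : x ⬝ᵥ (W * D * Wᵀ).mulVec x = ∑ i, D i i * c i ^ 2 := by
    rw [← Matrix.mulVec_mulVec, ← Matrix.mulVec_mulVec, Matrix.dotProduct_mulVec x W,
      show x ᵥ* W = c from by
        rw [hcdef, ← Matrix.vecMul_transpose Wᵀ x, Matrix.transpose_transpose], ← hcdef]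
    exact dot_diag_mulVec hD c
  rw [hform]
  constructor
  · calc a = ∑ i, a * c i ^ 2 := by rw [← Finset.mul_sum, hcsum, mul_one]
      _ ≤ ∑ i, D i i * c i ^ 2 :=
        Finset.sum_le_sum fun i _ => mul_le_mul_of_nonneg_right (hab i).1 (sq_nonneg _)
  · calc ∑ i, D i i * c i ^ 2 ≤ ∑ i, b * c i ^ 2 :=
        Finset.sum_le_sum fun i _ => mul_le_mul_of_nonneg_right (hab i).2 (sq_nonneg _)
      _ = b := by rw [← Finset.mul_sum, hcsum, mul_one]

lemma real_spectral_decomp {m : ℕ} (S : Matrix (Fin m) (Fin m) ℝ) (hS : S.PosSemidef) :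
    ∃ W D : Matrix (Fin m) (Fin m) ℝ, Wᵀ * W = 1 ∧ D.IsDiag ∧ (∀ i, 0 ≤ D i i) ∧
      S = W * D * Wᵀ := by
  have hH : S.IsHermitian := hS.1
  refine ⟨(hH.eigenvectorUnitary : Matrix (Fin m) (Fin m) ℝ),
    Matrix.diagonal (RCLike.ofReal ∘ hH.eigenvalues), ?_, Matrix.isDiag_diagonal _, ?_, ?_⟩
  · have := hH.eigenvectorUnitary.2.1
    simpa [Matrix.star_eq_conjTranspose, Matrix.conjTranspose_eq_transpose_of_trivial]
      using this
  · intro i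
    simp only [Matrix.diagonal_apply_eq, Function.comp]
    exact hS.eigenvalues_nonneg i
  · have := hH.spectral_theorem
    rw [Unitary.conjStarAlgAut_apply, Matrix.star_eq_conjTranspose,
      Matrix.conjTranspose_eq_transpose_of_trivial] at this
    exact this

lemma Pmat_mul_vcat {d p : ℕ} (S : Matrix (Fin d) (Fin d) ℝ)
    (A : Matrix (Fin p) (Fin d) ℝ) (B : Matrix (Fin d) (Fin d) ℝ) :
    Pmat p S * vcat A B = vcat A (S * B) := by
  ext i j
  cases i with
  | inl i => simp [Pmat, vcat, Matrix.mul_apply, Fintype.sum_sum_type, Matrix.one_apply,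
      Finset.sum_ite_eq, Matrix.fromBlocks]; rfl
  | inr i => simp [Pmat, vcat, Matrix.mul_apply, Fintype.sum_sum_type, Matrix.fromBlocks]; rfl

lemma vcat_mul {d p : ℕ} (A : Matrix (Fin p) (Fin d) ℝ) (B C : Matrix (Fin d) (Fin d) ℝ) :
    vcat A B * C = vcat (A * C) (B * C) := by
  ext i j
  cases i with
  | inl i => simp [vcat, Matrix.mul_apply]; rfl
  | inr i => simp [vcat, Matrix.mul_apply]; rfl

lemma vcat_mulVec {d p : ℕ} (A : Matrix (Fin p) (Fin d) ℝ) (B : Matrix (Fin d) (Fin d) ℝ)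
    (x : Fin d → ℝ) :
    (vcat A B).mulVec x = Sum.elim (A.mulVec x) (B.mulVec x) := by
  funext i
  cases i with
  | inl i => simp [vcat, Matrix.mulVec, dotProduct]; rfl
  | inr i => simp [vcat, Matrix.mulVec, dotProduct]; rfl

lemma msqrt_facts {ι : Type*} [Fintype ι] [DecidableEq ι] (S : Matrix ι ι ℝ)
    (h : S.PosSemidef) : msqrt S * msqrt S = S ∧ (msqrt S)ᵀ = msqrt S := by
  have hu : (star h.1.eigenvectorUnitary : Matrix ι ι ℝ) * h.1.eigenvectorUnitary = 1 :=
    h.1.eigenvectorUnitary.2.1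
  have hspec := h.1.spectral_theorem
  rw [Unitary.conjStarAlgAut_apply] at hspec
  unfold msqrt
  rw [dif_pos h]
  constructor
  · have hDD : Matrix.diagonal (((↑) ∘ Real.sqrt ∘ h.1.eigenvalues) : ι → ℝ) *
        Matrix.diagonal ((↑) ∘ Real.sqrt ∘ h.1.eigenvalues) =
        Matrix.diagonal (RCLike.ofReal ∘ h.1.eigenvalues) := by
      rw [Matrix.diagonal_mul_diagonal]
      congr 1; funext i
      simp [Real.mul_self_sqrt (h.eigenvalues_nonneg i)]
    conv_rhs => rw [hspec]
    simp only [Matrix.mul_assoc]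
    rw [← Matrix.mul_assoc (star _ : Matrix ι ι ℝ), hu, Matrix.one_mul,
      ← Matrix.mul_assoc (Matrix.diagonal _), hDD]
  · rw [Matrix.star_eq_conjTranspose, Matrix.conjTranspose_eq_transpose_of_trivial,
      Matrix.transpose_mul, Matrix.transpose_mul, Matrix.transpose_transpose,
      Matrix.diagonal_transpose, Matrix.mul_assoc]

end AuxSval

/-- Singular value bounds at the projection onto the manifold of global minima. -/
theorem projection_singular_value_bounds
    {d p : ℕ} (hdp : d ≤ p)
    (Sig : Matrix (Fin d) (Fin d) ℝ) (M : Matrix (Fin p) (Fin d) ℝ)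
    (hSig : Sig.PosDef)
    (U : Matrix (Fin p) (Fin d) ℝ) (Γ V : Matrix (Fin d) (Fin d) ℝ)
    (hrank : (M * msqrt Sig).rank = d)
    (hU : Uᵀ * U = 1) (hV : Vᵀ * V = 1)
    (hΓdiag : Γ.IsDiag) (hΓpos : ∀ i, 0 < Γ i i)
    (hSVD : M * msqrt Sig = U * Γ * Vᵀ)
    (θ θstar : Matrix (Fin p ⊕ Fin d) (Fin d) ℝ)
    (hmem : θstar ∈ Sman Sig U Γ V)
    (hproj : ∀ s ∈ Sman Sig U Γ V, Pnorm Sig (θ - θstar) ≤ Pnorm Sig (θ - s))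
    :
    K0 Sig M ≤ svalMin (Pmat p (msqrt Sig) * θstar * Sig) ^ 2
      ∧ svalMax (Pmat p (msqrt Sig) * θstar * Sig) ^ 2 ≤ K1 Sig M := by
  classical
  -- facts about msqrt Sig
  have hPSD : Sig.PosSemidef := hSig.posSemidef
  have hRR : msqrt Sig * msqrt Sig = Sig := by
    exact (msqrt_facts Sig hPSD).1
  have hRsym : (msqrt Sig)ᵀ = msqrt Sig := by
    exact (msqrt_facts Sig hPSD).2
  have hRunit : IsUnit (msqrt Sig).det := by
    have h2 : (msqrt Sig).det * (msqrt Sig).det = Sig.det := by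
      rw [← Matrix.det_mul, hRR]
    refine isUnit_iff_ne_zero.mpr fun h => ?_
    rw [h, mul_zero] at h2
    exact (ne_of_gt hSig.det_pos) h2.symm
  have hRinvSig : (msqrt Sig)⁻¹ * Sig = msqrt Sig := by
    have h := congrArg (fun A => (msqrt Sig)⁻¹ * A) hRR
    simp only [← Matrix.mul_assoc, Matrix.nonsing_inv_mul _ hRunit, Matrix.one_mul] at h
    exact h.symm
  have hRRinv : msqrt Sig * (msqrt Sig)⁻¹ = 1 := Matrix.mul_nonsing_inv _ hRunit
  -- facts about msqrt Γ
  have hΓpsd : Γ.PosSemidef := by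
    rw [← hΓdiag.diagonal_diag]
    exact Matrix.posSemidef_diagonal_iff.mpr fun i => (hΓpos i).le
  have hGG : msqrt Γ * msqrt Γ = Γ := by
    exact (msqrt_facts Γ hΓpsd).1
  have hGsym : (msqrt Γ)ᵀ = msqrt Γ := by
    exact (msqrt_facts Γ hΓpsd).2
  -- the point on the manifold
  obtain ⟨J, hJ, hθ⟩ := hmem
  have hJJt : J * Jᵀ = 1 := mul_eq_one_comm.mp hJ
  -- explicit form of the matrix
  have hXform : Pmat p (msqrt Sig) * θstar * Sig =
      vcat (U * msqrt Γ * Jᵀ * msqrt Sig) (V * msqrt Γ * Jᵀ * msqrt Sig) := by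
    have htop : U * msqrt Γ * Jᵀ * (msqrt Sig)⁻¹ * Sig = U * msqrt Γ * Jᵀ * msqrt Sig := by
      simp only [Matrix.mul_assoc]
      rw [hRinvSig]
    have hbot : msqrt Sig * ((msqrt Sig)⁻¹ * V * msqrt Γ * Jᵀ * (msqrt Sig)⁻¹) * Sig
        = V * msqrt Γ * Jᵀ * msqrt Sig := by
      simp only [Matrix.mul_assoc]
      rw [hRinvSig, ← Matrix.mul_assoc (msqrt Sig) (msqrt Sig)⁻¹, hRRinv, Matrix.one_mul]
    rw [hθ, Pmat_mul_vcat, vcat_mul, htop, hbot]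
  -- bounds on diagonal entries of Γ
  have hGam : ∀ i, svalMin (M * msqrt Sig) ≤ Γ i i ∧ Γ i i ≤ svalMax (M * msqrt Sig) :=
    fun i => sval_bounds_diag (M * msqrt Sig) U Γ V hU hV hΓdiag (fun i => (hΓpos i).le) hSVD i
  -- quadratic form bounds for Sig
  obtain ⟨W, D, hW, hDdiag, hDpos, hSigdec⟩ := real_spectral_decomp Sig hPSD
  have hDbounds : ∀ i, svalMin Sig ≤ D i i ∧ D i i ≤ svalMax Sig :=
    fun i => sval_bounds_diag Sig W D W hW hW hDdiag hDpos hSigdec i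
  have hSigQ : ∀ x : Fin d → ℝ, vnorm x = 1 →
      svalMin Sig ≤ x ⬝ᵥ Sig.mulVec x ∧ x ⬝ᵥ Sig.mulVec x ≤ svalMax Sig := by
    intro x hx
    have := quad_bounds W D hW hDdiag hDbounds hx
    rwa [← hSigdec] at this
  -- nonnegativity
  have hs0 : 0 ≤ svalMin (M * msqrt Sig) := svalMin_nonneg _
  have hs1 : 0 ≤ svalMax (M * msqrt Sig) := svalMax_nonneg _
  have ht0 : 0 ≤ svalMin Sig := svalMin_nonneg _
  have ht1 : 0 ≤ svalMax Sig := svalMax_nonneg _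
  have hK0nn : 0 ≤ K0 Sig M := by
    unfold K0
    exact mul_nonneg (mul_nonneg (by norm_num) hs0) ht0
  have hK1nn : 0 ≤ K1 Sig M := by
    unfold K1
    exact mul_nonneg (mul_nonneg (by norm_num) hs1) ht1
  -- key pointwise estimate
  have hkey : ∀ x : Fin d → ℝ, vnorm x = 1 →
      K0 Sig M ≤ vnorm ((Pmat p (msqrt Sig) * θstar * Sig).mulVec x) ^ 2 ∧
        vnorm ((Pmat p (msqrt Sig) * θstar * Sig).mulVec x) ^ 2 ≤ K1 Sig M := by
    intro x hx
    set y := Jᵀ.mulVec ((msqrt Sig).mulVec x) with hy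
    have e1 : U.mulVec ((msqrt Γ).mulVec y) = (U * msqrt Γ * Jᵀ * msqrt Sig).mulVec x := by
      rw [hy, Matrix.mulVec_mulVec, Matrix.mulVec_mulVec, Matrix.mulVec_mulVec]
    have e2 : V.mulVec ((msqrt Γ).mulVec y) = (V * msqrt Γ * Jᵀ * msqrt Sig).mulVec x := by
      rw [hy, Matrix.mulVec_mulVec, Matrix.mulVec_mulVec, Matrix.mulVec_mulVec]
    have hGy : ∑ i, ((msqrt Γ).mulVec y i) ^ 2 = ∑ i, Γ i i * y i ^ 2 := by
      rw [sum_sq_mulVec, hGsym, hGG, dotProduct_comm]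
      exact dot_diag_mulVec hΓdiag y
    have t1 : ∑ i, ((U * msqrt Γ * Jᵀ * msqrt Sig).mulVec x i) ^ 2 = ∑ i, Γ i i * y i ^ 2 := by
      rw [← e1, sum_sq_mulVec, hU, Matrix.one_mulVec, ← sum_sq_eq_dot, hGy]
    have t2 : ∑ i, ((V * msqrt Γ * Jᵀ * msqrt Sig).mulVec x i) ^ 2 = ∑ i, Γ i i * y i ^ 2 := by
      rw [← e2, sum_sq_mulVec, hV, Matrix.one_mulVec, ← sum_sq_eq_dot, hGy]
    have hXx : vnorm ((Pmat p (msqrt Sig) * θstar * Sig).mulVec x) ^ 2 =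
        2 * ∑ i, Γ i i * y i ^ 2 := by
      rw [hXform, vcat_mulVec, vnorm_sq', Fintype.sum_sum_type]
      simp only [Sum.elim_inl, Sum.elim_inr]
      rw [t1, t2]; ring
    have hsumy : ∑ i, y i ^ 2 = x ⬝ᵥ Sig.mulVec x := by
      rw [hy, sum_sq_mulVec, Matrix.transpose_transpose, hJJt, Matrix.one_mulVec,
        ← sum_sq_eq_dot, sum_sq_mulVec, hRsym, hRR, dotProduct_comm]
    obtain ⟨hq0, hq1⟩ := hSigQ x hx
    have l1 : svalMin (M * msqrt Sig) * ∑ i, y i ^ 2 ≤ ∑ i, Γ i i * y i ^ 2 := by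
      rw [Finset.mul_sum]
      exact Finset.sum_le_sum fun i _ => mul_le_mul_of_nonneg_right (hGam i).1 (sq_nonneg _)
    have l2 : ∑ i, Γ i i * y i ^ 2 ≤ svalMax (M * msqrt Sig) * ∑ i, y i ^ 2 := by
      rw [Finset.mul_sum]
      exact Finset.sum_le_sum fun i _ => mul_le_mul_of_nonneg_right (hGam i).2 (sq_nonneg _)
    rw [hsumy] at l1 l2
    have m1 : svalMin (M * msqrt Sig) * svalMin Sig ≤
        svalMin (M * msqrt Sig) * (x ⬝ᵥ Sig.mulVec x) :=
      mul_le_mul_of_nonneg_left hq0 hs0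
    have m2 : svalMax (M * msqrt Sig) * (x ⬝ᵥ Sig.mulVec x) ≤
        svalMax (M * msqrt Sig) * svalMax Sig :=
      mul_le_mul_of_nonneg_left hq1 hs1
    rw [hXx]
    unfold K0 K1
    constructor
    · linarith
    · linarith
  constructor
  · -- lower bound
    rcases isEmpty_or_nonempty (Fin d) with he | hne
    · have hz : K0 Sig M = 0 := by
        unfold K0
        rw [svalMin_of_isEmpty (M * msqrt Sig)]; ring
      rw [hz, svalMin_of_isEmpty]
      norm_num
    · obtain ⟨i0⟩ := hne
      have hx0 : vnorm (Pi.single i0 (1:ℝ)) = 1 := by rw [vnorm_single]; norm_num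
      have hne_set : {r | ∃ x : Fin d → ℝ, vnorm x = 1 ∧
          r = vnorm ((Pmat p (msqrt Sig) * θstar * Sig).mulVec x)}.Nonempty :=
        ⟨_, Pi.single i0 1, hx0, rfl⟩
      have hlow : Real.sqrt (K0 Sig M) ≤ svalMin (Pmat p (msqrt Sig) * θstar * Sig) := by
        refine le_csInf hne_set ?_
        rintro r ⟨x, hx, rfl⟩
        calc Real.sqrt (K0 Sig M)
            ≤ Real.sqrt (vnorm ((Pmat p (msqrt Sig) * θstar * Sig).mulVec x) ^ 2) :=
              Real.sqrt_le_sqrt (hkey x hx).1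
          _ = vnorm ((Pmat p (msqrt Sig) * θstar * Sig).mulVec x) :=
              Real.sqrt_sq (vnorm_nonneg' _)
      have := pow_le_pow_left₀ (Real.sqrt_nonneg _) hlow 2
      rwa [Real.sq_sqrt hK0nn] at this
  · -- upper bound
    have hup : svalMax (Pmat p (msqrt Sig) * θstar * Sig) ≤ Real.sqrt (K1 Sig M) := by
      refine Real.sSup_le ?_ (Real.sqrt_nonneg _)
      rintro r ⟨x, hx, rfl⟩
      calc vnorm ((Pmat p (msqrt Sig) * θstar * Sig).mulVec x)
          = Real.sqrt (vnorm ((Pmat p (msqrt Sig) * θstar * Sig).mulVec x) ^ 2) :=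
            (Real.sqrt_sq (vnorm_nonneg' _)).symm
        _ ≤ Real.sqrt (K1 Sig M) := Real.sqrt_le_sqrt (hkey x hx).2
    have := pow_le_pow_left₀ (svalMax_nonneg _) hup 2
    rwa [Real.sq_sqrt hK1nn] at this


end
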